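/- arXiv:gr-qc/0701034 — 3 statements merged into one kernel-verified Lean document; each statement's English description precedes it below -/
import Mathlib

section
/- For all constants k, Λ ∈ ℝ, reals 0 < r₀ ≤ R, U > 0, V > 0, B ≥ 0 and C ≥ 0, there exists C̃ ∈ ℝ with the following property. Let r, Ω : [0,U]×[0,V] → ℝ be C² with r > 0 and Ω > 0, and let T_uv, T_uu, T_vv, S : [0,U]×[0,V] → ℝ be continuous and nonnegative such that, writing ν = ∂_u r and λ = ∂_v r: (evol1) ∂_u∂_v r = −kΩ²/(4r) − r⁻¹νλ + 4πr T_uv + (1/4)rΩ²Λ; (evol2) ∂_u∂_v log Ω = −4π T_uv + kΩ²/(4r²) + r⁻²νλ − πΩ² S; (const1) ∂_v(Ω⁻²λ) = −4πr T_vv Ω⁻²; (const2) ∂_u(Ω⁻²ν) = −4πr T_uu Ω⁻². Suppose moreover r₀ ≤ r ≤ R on the rectangle, ∫₀^U ∫₀^V Ω² du dv ≤ B, and |log Ω²(0,v)| ≤ C and |log Ω²(u,0)| ≤ C for all u ∈ [0,U], v ∈ [0,V]. Then log Ω² ≤ C̃ on all of [0,U]×[0,V]. -/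
open Real

/-- Partial derivative with respect to the first (`u`) coordinate. -/
noncomputable def pd1 (f : ℝ × ℝ → ℝ) (p : ℝ × ℝ) : ℝ :=
  deriv (fun x => f (x, p.2)) p.1

/-- Partial derivative with respect to the second (`v`) coordinate. -/
noncomputable def pd2 (f : ℝ × ℝ → ℝ) (p : ℝ × ℝ) : ℝ :=
  deriv (fun y => f (p.1, y)) p.2

/-- The closed characteristic rectangle `[0,U] × [0,V]`. -/
def rect (U V : ℝ) : Set (ℝ × ℝ) := Set.Icc 0 U ×ˢ Set.Icc 0 V

/-!
Since `∂_u∂_v log r = r⁻¹ ∂_u∂_v r - r⁻² νλ`, the terms in `νλ`, of unknown sign, cancel between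
`(evol1)` and twice `(evol2)`: the function `G = log (Ω² r)` satisfies
`∂_u∂_v G = -4π T_uv + kΩ²/(4r²) + ΛΩ²/4 - 2πΩ²S ≤ (|k|/(4r₀²) + |Λ|/4) Ω²`.
Integrating over `[0,u] × [0,v]` bounds `G(u,v) - G(u,0) - G(0,v) + G(0,0)` by a multiple of the
spacetime volume, while the data and the bounds on `r` control `G` at the other three corners.
The mixed derivative is only meaningful in the open rectangle, so the integration is carried out
on closed rectangles inside it and the corners are moved to the boundary by continuity of `G`.
-/

open Set Filter Topology MeasureTheory

theorem ContDiffOn.differentiableAt_of_isOpen {E E' : Type*} [NormedAddCommGroup E]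
    [NormedSpace ℝ E] [NormedAddCommGroup E'] [NormedSpace ℝ E'] {f : E → E'} {s : Set E}
    {x : E} {n : WithTop ℕ∞} (hf : ContDiffOn ℝ n f s) (hs : IsOpen s) (hn : n ≠ 0)
    (hx : x ∈ s) : DifferentiableAt ℝ f x :=
  (hf.differentiableOn hn).differentiableAt (hs.mem_nhds hx)

section PartialDerivatives

variable {F G : ℝ × ℝ → ℝ} {s : Set (ℝ × ℝ)} {q : ℝ × ℝ}

theorem DifferentiableAt.hasDerivAt_pd1 (h : DifferentiableAt ℝ F q) :
    HasDerivAt (fun x => F (x, q.2)) (pd1 F q) q.1 :=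
  (h.comp q.1 (differentiableAt_id.prodMk (differentiableAt_const _))).hasDerivAt

theorem DifferentiableAt.hasDerivAt_pd2 (h : DifferentiableAt ℝ F q) :
    HasDerivAt (fun y => F (q.1, y)) (pd2 F q) q.2 :=
  (h.comp q.2 ((differentiableAt_const _).prodMk differentiableAt_id)).hasDerivAt

theorem DifferentiableAt.pd1_eq_fderiv (h : DifferentiableAt ℝ F q) :
    pd1 F q = fderiv ℝ F q (1, 0) :=
  (h.hasFDerivAt.comp_hasDerivAt q.1
    ((hasDerivAt_id _).prodMk (hasDerivAt_const _ _))).deriv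

theorem DifferentiableAt.pd2_eq_fderiv (h : DifferentiableAt ℝ F q) :
    pd2 F q = fderiv ℝ F q (0, 1) :=
  (h.hasFDerivAt.comp_hasDerivAt q.2
    ((hasDerivAt_const _ _).prodMk (hasDerivAt_id _))).deriv

theorem Filter.EventuallyEq.pd1_eq (h : F =ᶠ[𝓝 q] G) : pd1 F q = pd1 G q :=
  Filter.EventuallyEq.deriv_eq (f₁ := fun x => F (x, q.2))
    (((continuous_id.prodMk continuous_const).tendsto q.1).eventually h)

theorem ContDiffOn.pd1 {m n : WithTop ℕ∞} (hF : ContDiffOn ℝ n F s) (hs : IsOpen s)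
    (hmn : m + 1 ≤ n) : ContDiffOn ℝ m (pd1 F) s := by
  have hn : n ≠ 0 := by rintro rfl; simp at hmn
  exact ((hF.fderiv_of_isOpen hs hmn).clm_apply contDiffOn_const).congr fun z hz =>
    (hF.differentiableAt_of_isOpen hs hn hz).pd1_eq_fderiv

theorem ContDiffOn.pd2 {m n : WithTop ℕ∞} (hF : ContDiffOn ℝ n F s) (hs : IsOpen s)
    (hmn : m + 1 ≤ n) : ContDiffOn ℝ m (pd2 F) s := by
  have hn : n ≠ 0 := by rintro rfl; simp at hmn
  exact ((hF.fderiv_of_isOpen hs hmn).clm_apply contDiffOn_const).congr fun z hz =>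
    (hF.differentiableAt_of_isOpen hs hn hz).pd2_eq_fderiv

theorem pd1_pd2_const_mul_add (hs : IsOpen s) (hq : q ∈ s) (hF : ContDiffOn ℝ 2 F s)
    (hG : ContDiffOn ℝ 2 G s) (a : ℝ) :
    pd1 (pd2 (fun z => a * F z + G z)) q = a * pd1 (pd2 F) q + pd1 (pd2 G) q := by
  have hpd2 : pd2 (fun z => a * F z + G z) =ᶠ[𝓝 q] fun z => a * pd2 F z + pd2 G z := by
    filter_upwards [hs.mem_nhds hq] with z hz
    exact ((hF.differentiableAt_of_isOpen hs two_ne_zero hz).hasDerivAt_pd2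
      |>.const_mul a |>.add
      (hG.differentiableAt_of_isOpen hs two_ne_zero hz).hasDerivAt_pd2).deriv
  rw [hpd2.pd1_eq]
  exact (((hF.pd2 hs le_rfl).differentiableAt_of_isOpen hs one_ne_zero hq
    |>.hasDerivAt_pd1 |>.const_mul a).add
    ((hG.pd2 hs le_rfl).differentiableAt_of_isOpen hs one_ne_zero hq
    |>.hasDerivAt_pd1)).deriv

theorem pd1_pd2_log (hs : IsOpen s) (hq : q ∈ s) (hF : ContDiffOn ℝ 2 F s)
    (hF0 : ∀ z ∈ s, F z ≠ 0) :
    pd1 (pd2 (fun z => log (F z))) q =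
      (pd1 (pd2 F) q * F q - pd2 F q * pd1 F q) / F q ^ 2 := by
  have hpd2 : pd2 (fun z => log (F z)) =ᶠ[𝓝 q] fun z => pd2 F z / F z := by
    filter_upwards [hs.mem_nhds hq] with z hz
    exact ((hF.differentiableAt_of_isOpen hs two_ne_zero hz).hasDerivAt_pd2
      |>.log (hF0 z hz)).deriv
  rw [hpd2.pd1_eq]
  exact (((hF.pd2 hs le_rfl).differentiableAt_of_isOpen hs one_ne_zero hq
    |>.hasDerivAt_pd1).div
    (hF.differentiableAt_of_isOpen hs two_ne_zero hq).hasDerivAt_pd1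
    (hF0 q hq)).deriv

theorem integral_pd1_eq_sub {a u y : ℝ} (hs : IsOpen s) (hF : ContDiffOn ℝ 1 F s)
    (hseg : ∀ x ∈ uIcc a u, (x, y) ∈ s) :
    ∫ x in a..u, pd1 F (x, y) = F (u, y) - F (a, y) :=
  intervalIntegral.integral_eq_sub_of_hasDerivAt (f := fun x => F (x, y))
    (fun x hx => (hF.differentiableAt_of_isOpen hs one_ne_zero (hseg x hx)).hasDerivAt_pd1)
    (((hF.pd1 (m := 0) hs le_rfl).continuousOn.comp (by fun_prop) hseg).intervalIntegrable)

theorem integral_pd2_eq_sub {b v x : ℝ} (hs : IsOpen s) (hF : ContDiffOn ℝ 1 F s)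
    (hseg : ∀ y ∈ uIcc b v, (x, y) ∈ s) :
    ∫ y in b..v, pd2 F (x, y) = F (x, v) - F (x, b) :=
  intervalIntegral.integral_eq_sub_of_hasDerivAt (f := fun y => F (x, y))
    (fun y hy => (hF.differentiableAt_of_isOpen hs one_ne_zero (hseg y hy)).hasDerivAt_pd2)
    (((hF.pd2 (m := 0) hs le_rfl).continuousOn.comp (by fun_prop) hseg).intervalIntegrable)

theorem integral_integral_pd1_pd2 {a u b v : ℝ} (hs : IsOpen s) (hG : ContDiffOn ℝ 2 G s)
    (hsub : uIcc a u ×ˢ uIcc b v ⊆ s) :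
    ∫ y in b..v, ∫ x in a..u, pd1 (pd2 G) (x, y) =
      G (u, v) - G (u, b) - (G (a, v) - G (a, b)) := by
  have hG1 : ContDiffOn ℝ 1 (pd2 G) s := hG.pd2 hs le_rfl
  have hvert : ∀ x ∈ uIcc a u, ∀ y ∈ uIcc b v, (x, y) ∈ s := fun x hx y hy => hsub ⟨hx, hy⟩
  have hint : ∀ x ∈ uIcc a u, IntervalIntegrable (fun y => pd2 G (x, y)) volume b v :=
    fun x hx => (hG1.continuousOn.comp (by fun_prop) (hvert x hx)).intervalIntegrable
  rw [intervalIntegral.integral_congr fun y hy =>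
      integral_pd1_eq_sub hs hG1 fun x hx => hvert x hx y hy,
    intervalIntegral.integral_sub (hint u right_mem_uIcc) (hint a left_mem_uIcc),
    integral_pd2_eq_sub hs (hG.of_le one_le_two) (hvert u right_mem_uIcc),
    integral_pd2_eq_sub hs (hG.of_le one_le_two) (hvert a left_mem_uIcc)]

end PartialDerivatives

theorem intervalIntegral_intervalIntegral_eq_setIntegral_prod {f : ℝ × ℝ → ℝ} {a u b v : ℝ}
    (hau : a ≤ u) (hbv : b ≤ v) (hf : IntegrableOn f (Ioc a u ×ˢ Ioc b v)) :
    ∫ x in a..u, ∫ y in b..v, f (x, y) = ∫ z in Ioc a u ×ˢ Ioc b v, f z := by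
  simp only [intervalIntegral.integral_of_le hau, intervalIntegral.integral_of_le hbv]
  rw [Measure.volume_eq_prod, setIntegral_prod f (by rwa [← Measure.volume_eq_prod])]

theorem intervalIntegral_intervalIntegral_le_of_le {f w : ℝ × ℝ → ℝ} {a u b v U V : ℝ}
    (ha : 0 ≤ a) (hau : a ≤ u) (huU : u ≤ U) (hb : 0 ≤ b) (hbv : b ≤ v) (hvV : v ≤ V)
    (hf : ContinuousOn f (Icc a u ×ˢ Icc b v)) (hw : ContinuousOn w (rect U V))
    (hw0 : ∀ p ∈ rect U V, 0 ≤ w p) (hfw : ∀ p ∈ Icc a u ×ˢ Icc b v, f p ≤ w p) :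
    ∫ y in b..v, ∫ x in a..u, f (x, y) ≤ ∫ x in 0..U, ∫ y in 0..V, w (x, y) := by
  have hQ : Ioc a u ×ˢ Ioc b v ⊆ Icc a u ×ˢ Icc b v :=
    prod_mono Ioc_subset_Icc_self Ioc_subset_Icc_self
  have hQP : Ioc a u ×ˢ Ioc b v ⊆ Ioc 0 U ×ˢ Ioc 0 V :=
    prod_mono (Ioc_subset_Ioc ha huU) (Ioc_subset_Ioc hb hvV)
  have hP : Ioc 0 U ×ˢ Ioc 0 V ⊆ rect U V := prod_mono Ioc_subset_Icc_self Ioc_subset_Icc_self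
  have hfi : IntegrableOn f (Ioc a u ×ˢ Ioc b v) :=
    (hf.integrableOn_compact (isCompact_Icc.prod isCompact_Icc)).mono_set hQ
  have hwi : IntegrableOn w (Ioc 0 U ×ˢ Ioc 0 V) :=
    (hw.integrableOn_compact (isCompact_Icc.prod isCompact_Icc)).mono_set hP
  rw [← intervalIntegral_intervalIntegral_swap (by rwa [uIoc_of_le hau, uIoc_of_le hbv]),
    intervalIntegral_intervalIntegral_eq_setIntegral_prod hau hbv hfi,
    intervalIntegral_intervalIntegral_eq_setIntegral_prod (ha.trans (hau.trans huU))
      (hb.trans (hbv.trans hvV)) hwi]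
  calc ∫ z in Ioc a u ×ˢ Ioc b v, f z ≤ ∫ z in Ioc a u ×ˢ Ioc b v, w z :=
        setIntegral_mono_on hfi (hwi.mono_set hQP) (measurableSet_Ioc.prod measurableSet_Ioc)
          fun p hp => hfw p (hQ hp)
    _ ≤ ∫ z in Ioc 0 U ×ˢ Ioc 0 V, w z :=
        setIntegral_mono_set hwi
          (ae_restrict_of_forall_mem (measurableSet_Ioc.prod measurableSet_Ioc)
            fun p hp => hw0 p (hP hp))
          hQP.eventuallyLE

theorem ContinuousOn.le_of_forall_Ioo_prod_le {f : ℝ × ℝ → ℝ} {U V c : ℝ} (hU : 0 < U)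
    (hV : 0 < V) (hf : ContinuousOn f (rect U V)) (h : ∀ p ∈ Ioo 0 U ×ˢ Ioo 0 V, f p ≤ c) :
    ∀ p ∈ rect U V, f p ≤ c := by
  have hcl : closure (Ioo 0 U ×ˢ Ioo 0 V) = rect U V := by
    rw [closure_prod_eq, closure_Ioo hU.ne, closure_Ioo hV.ne, rect]
  intro p hp
  exact ContinuousWithinAt.closure_le (hcl ▸ hp) ((hf p hp).mono (hcl ▸ subset_closure))
    continuousWithinAt_const h

theorem sub_sub_sub_le_integral_of_pd1_pd2_le {G w : ℝ × ℝ → ℝ} {U V : ℝ} (hU : 0 < U)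
    (hV : 0 < V) (hGc : ContinuousOn G (rect U V)) (hG : ContDiffOn ℝ 2 G (Ioo 0 U ×ˢ Ioo 0 V))
    (hw : ContinuousOn w (rect U V)) (hw0 : ∀ p ∈ rect U V, 0 ≤ w p)
    (hGw : ∀ p ∈ Ioo 0 U ×ˢ Ioo 0 V, pd1 (pd2 G) p ≤ w p) :
    ∀ p ∈ rect U V,
      G p - G (p.1, 0) - (G (0, p.2) - G (0, 0)) ≤ ∫ x in 0..U, ∫ y in 0..V, w (x, y) := by
  have hs : IsOpen (Ioo 0 U ×ˢ Ioo 0 V) := isOpen_Ioo.prod isOpen_Ioo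
  have hmixed : ContinuousOn (pd1 (pd2 G)) (Ioo 0 U ×ˢ Ioo 0 V) :=
    ((hG.pd2 hs le_rfl).pd1 (m := 0) hs le_rfl).continuousOn
  have hinterior : ∀ {a u b v : ℝ}, 0 < a → a ≤ u → u < U → 0 < b → b ≤ v → v < V →
      G (u, v) - G (u, b) - (G (a, v) - G (a, b)) ≤ ∫ x in 0..U, ∫ y in 0..V, w (x, y) := by
    intro a u b v ha hau huU hb hbv hvV
    have hsub : Icc a u ×ˢ Icc b v ⊆ Ioo 0 U ×ˢ Ioo 0 V :=
      prod_mono (Icc_subset_Ioo ha huU) (Icc_subset_Ioo hb hvV)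
    rw [← integral_integral_pd1_pd2 hs hG (by rwa [uIcc_of_le hau, uIcc_of_le hbv])]
    exact intervalIntegral_intervalIntegral_le_of_le ha.le hau huU.le hb.le hbv hvV.le
      (hmixed.mono hsub) hw hw0 fun p hp => hGw p (hsub hp)
  have hcorner : ∀ {u v : ℝ}, 0 < u → u < U → 0 < v → v < V →
      G (u, v) - G (u, 0) - (G (0, v) - G (0, 0)) ≤ ∫ x in 0..U, ∫ y in 0..V, w (x, y) := by
    intro u v hu huU hv hvV
    refine ContinuousOn.le_of_forall_Ioo_prod_le (f := fun p => G (u, v) - G (u, p.2) -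
      (G (p.1, v) - G p)) hu hv ?_ (fun p hp => hinterior hp.1.1 hp.1.2.le huU hp.2.1 hp.2.2.le hvV)
      (0, 0) ⟨left_mem_Icc.2 hu.le, left_mem_Icc.2 hv.le⟩
    have hsub : rect u v ⊆ rect U V := prod_mono (Icc_subset_Icc_right huU.le)
      (Icc_subset_Icc_right hvV.le)
    exact (continuousOn_const.sub (hGc.comp (f := fun p => (u, p.2)) (by fun_prop) fun p hp =>
        ⟨⟨hu.le, huU.le⟩, (hsub hp).2⟩)).sub
      ((hGc.comp (f := fun p => (p.1, v)) (by fun_prop) fun p hp =>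
        ⟨(hsub hp).1, hv.le, hvV.le⟩).sub (hGc.mono hsub))
  refine ContinuousOn.le_of_forall_Ioo_prod_le (f := fun p => G p - G (p.1, 0) -
    (G (0, p.2) - G (0, 0))) hU hV ?_ fun p hp => hcorner hp.1.1 hp.1.2 hp.2.1 hp.2.2
  exact (hGc.sub (hGc.comp (f := fun p => (p.1, 0)) (by fun_prop) fun p hp =>
      ⟨hp.1, left_mem_Icc.2 hV.le⟩)).sub
    ((hGc.comp (f := fun p => (0, p.2)) (by fun_prop) fun p hp =>
      ⟨left_mem_Icc.2 hU.le, hp.2⟩).sub continuousOn_const)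

theorem log_Omega_sq_r_source_le {k Λ r₀ r Ω T S : ℝ} (hr₀ : 0 < r₀) (hr : r₀ ≤ r)
    (hT : 0 ≤ T) (hS : 0 ≤ S) :
    -(4 * π * T) + k * Ω ^ 2 / (4 * r ^ 2) + Ω ^ 2 * Λ / 4 - 2 * π * Ω ^ 2 * S ≤
      (|k| / (4 * r₀ ^ 2) + |Λ| / 4) * Ω ^ 2 := by
  have hk : k * Ω ^ 2 / (4 * r ^ 2) ≤ |k| * Ω ^ 2 / (4 * r₀ ^ 2) :=
    calc k * Ω ^ 2 / (4 * r ^ 2) ≤ |k| * Ω ^ 2 / (4 * r ^ 2) := by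
          gcongr
          exact le_abs_self k
      _ ≤ |k| * Ω ^ 2 / (4 * r₀ ^ 2) := by gcongr
  have hΛ : Ω ^ 2 * Λ / 4 ≤ Ω ^ 2 * |Λ| / 4 := by
    gcongr
    exact le_abs_self Λ
  have hT' : 0 ≤ 4 * π * T := by positivity
  have hS' : 0 ≤ 2 * π * Ω ^ 2 * S := by positivity
  linarith [show (|k| / (4 * r₀ ^ 2) + |Λ| / 4) * Ω ^ 2 =
    |k| * Ω ^ 2 / (4 * r₀ ^ 2) + Ω ^ 2 * |Λ| / 4 by ring]

theorem pd1_pd2_log_Omega_sq_r_le {k Λ r₀ : ℝ} {r Ω T S : ℝ × ℝ → ℝ} {s : Set (ℝ × ℝ)}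
    {q : ℝ × ℝ} (hs : IsOpen s) (hq : q ∈ s) (hr : ContDiffOn ℝ 2 r s)
    (hΩ : ContDiffOn ℝ 2 Ω s) (hr0 : ∀ z ∈ s, r z ≠ 0) (hΩ0 : ∀ z ∈ s, Ω z ≠ 0)
    (hr₀ : 0 < r₀) (hrq : r₀ ≤ r q) (hT : 0 ≤ T q) (hS : 0 ≤ S q)
    (evol1 : pd1 (pd2 r) q = -(k * Ω q ^ 2) / (4 * r q) - (r q)⁻¹ * pd1 r q * pd2 r q
      + 4 * π * r q * T q + (1 / 4) * r q * Ω q ^ 2 * Λ)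
    (evol2 : pd1 (pd2 (fun z => log (Ω z))) q = -(4 * π * T q) + k * Ω q ^ 2 / (4 * r q ^ 2)
      + (r q ^ 2)⁻¹ * pd1 r q * pd2 r q - π * Ω q ^ 2 * S q) :
    pd1 (pd2 fun z => log (Ω z ^ 2) + log (r z)) q ≤ (|k| / (4 * r₀ ^ 2) + |Λ| / 4) * Ω q ^ 2 := by
  have hlog_sq : (fun z => log (Ω z ^ 2) + log (r z)) = fun z => 2 * log (Ω z) + log (r z) := by
    simp only [log_pow, Nat.cast_ofNat]
  rw [hlog_sq, pd1_pd2_const_mul_add hs hq (hΩ.log hΩ0) (hr.log hr0), pd1_pd2_log hs hq hr hr0,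
    evol1, evol2]
  refine le_of_eq_of_le ?_ (log_Omega_sq_r_source_le hr₀ hrq hT hS)
  have := hr0 q hq
  field_simp
  ring

theorem logOmega_squared_upper_bound_general
    (k Λ r₀ R U V B C : ℝ)
    (hr₀ : 0 < r₀) (hU : 0 < U) (hV : 0 < V) :
    ∃ C' : ℝ,
      ∀ (r Ω Tuv Tuu Tvv S : ℝ × ℝ → ℝ),
        ContDiffOn ℝ 2 r (rect U V) → ContDiffOn ℝ 2 Ω (rect U V) →
        (∀ p ∈ rect U V, 0 < r p) → (∀ p ∈ rect U V, 0 < Ω p) →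
        ContinuousOn Tuv (rect U V) → ContinuousOn Tuu (rect U V) →
        ContinuousOn Tvv (rect U V) → ContinuousOn S (rect U V) →
        (∀ p ∈ rect U V, 0 ≤ Tuv p) → (∀ p ∈ rect U V, 0 ≤ Tuu p) →
        (∀ p ∈ rect U V, 0 ≤ Tvv p) → (∀ p ∈ rect U V, 0 ≤ S p) →
        (∀ p ∈ rect U V, pd1 (pd2 r) p =
          -(k * Ω p ^ 2) / (4 * r p) - (r p)⁻¹ * pd1 r p * pd2 r p
            + 4 * π * r p * Tuv p + (1 / 4) * r p * Ω p ^ 2 * Λ) →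
        (∀ p ∈ rect U V, pd1 (pd2 (fun q => Real.log (Ω q))) p =
          -(4 * π * Tuv p) + k * Ω p ^ 2 / (4 * r p ^ 2)
            + (r p ^ 2)⁻¹ * pd1 r p * pd2 r p - π * Ω p ^ 2 * S p) →
        (∀ p ∈ rect U V, pd2 (fun q => (Ω q ^ 2)⁻¹ * pd2 r q) p =
          -(4 * π * r p * Tvv p * (Ω p ^ 2)⁻¹)) →
        (∀ p ∈ rect U V, pd1 (fun q => (Ω q ^ 2)⁻¹ * pd1 r q) p =
          -(4 * π * r p * Tuu p * (Ω p ^ 2)⁻¹)) →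
        (∀ p ∈ rect U V, r₀ ≤ r p ∧ r p ≤ R) →
        (∫ u in (0 : ℝ)..U, ∫ v in (0 : ℝ)..V, Ω (u, v) ^ 2) ≤ B →
        (∀ v ∈ Set.Icc (0 : ℝ) V, |Real.log (Ω (0, v) ^ 2)| ≤ C) →
        (∀ u ∈ Set.Icc (0 : ℝ) U, |Real.log (Ω (u, 0) ^ 2)| ≤ C) →
        ∀ p ∈ rect U V, Real.log (Ω p ^ 2) ≤ C' := by
  set M := |k| / (4 * r₀ ^ 2) + |Λ| / 4
  refine ⟨3 * C + 2 * log R - 2 * log r₀ + M * B, ?_⟩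
  intro r Ω Tuv _ _ S hr hΩ hr0 hΩ0 _ _ _ _ hTuv _ _ hS evol1 evol2 _ _ hrRange hvol hdata0
    hdata1
  have hs : IsOpen (Ioo 0 U ×ˢ Ioo 0 V) := isOpen_Ioo.prod isOpen_Ioo
  have hsrect : Ioo 0 U ×ˢ Ioo 0 V ⊆ rect U V := prod_mono Ioo_subset_Icc_self Ioo_subset_Icc_self
  have hG : ContDiffOn ℝ 2 (fun z => log (Ω z ^ 2) + log (r z)) (rect U V) :=
    ((hΩ.pow 2).log fun z hz => (pow_pos (hΩ0 z hz) 2).ne').add (hr.log fun z hz => (hr0 z hz).ne')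
  have hcorner := sub_sub_sub_le_integral_of_pd1_pd2_le (w := fun z => M * Ω z ^ 2) hU hV
    hG.continuousOn (hG.mono hsrect) (continuousOn_const.mul (hΩ.continuousOn.pow 2))
    (fun _ _ => by positivity) fun q hq =>
      pd1_pd2_log_Omega_sq_r_le hs hq (hr.mono hsrect) (hΩ.mono hsrect)
        (fun z hz => (hr0 z (hsrect hz)).ne') (fun z hz => (hΩ0 z (hsrect hz)).ne') hr₀
        (hrRange q (hsrect hq)).1 (hTuv q (hsrect hq)) (hS q (hsrect hq))
        (evol1 q (hsrect hq)) (evol2 q (hsrect hq))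
  have hvolM : ∫ x in 0..U, ∫ y in 0..V, M * Ω (x, y) ^ 2 ≤ M * B := by
    simp only [intervalIntegral.integral_const_mul]
    exact mul_le_mul_of_nonneg_left hvol (by positivity)
  have hlogr : ∀ z ∈ rect U V, log r₀ ≤ log (r z) ∧ log (r z) ≤ log R := fun z hz =>
    ⟨log_le_log hr₀ (hrRange z hz).1, log_le_log (hr0 z hz) (hrRange z hz).2⟩
  intro p hp
  have h00 : ((0 : ℝ), (0 : ℝ)) ∈ rect U V := ⟨left_mem_Icc.2 hU.le, left_mem_Icc.2 hV.le⟩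
  have hu0 : (p.1, (0 : ℝ)) ∈ rect U V := ⟨hp.1, left_mem_Icc.2 hV.le⟩
  have h0v : ((0 : ℝ), p.2) ∈ rect U V := ⟨left_mem_Icc.2 hU.le, hp.2⟩
  linarith [hcorner p hp, (abs_le.1 (hdata1 p.1 hp.1)).2, (abs_le.1 (hdata0 p.2 hp.2)).2,
    (abs_le.1 (hdata0 0 h00.2)).1, (hlogr p hp).1, (hlogr _ hu0).2, (hlogr _ h0v).2,
    (hlogr _ h00).1]

/-- The a priori estimate of Section 7.4 ('Alternative assumptions'): finite spacetime
volume `∫∫ Ω²`, two-sided bounds on `r`, and data bounds on the initial null segments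
force a uniform upper bound on `log Ω²` on the whole rectangle. -/
theorem logOmega_squared_upper_bound
    (k Λ r₀ R U V B C : ℝ)
    (hr₀ : 0 < r₀) (hrR : r₀ ≤ R) (hU : 0 < U) (hV : 0 < V) (hB : 0 ≤ B) (hC : 0 ≤ C) :
    ∃ C' : ℝ,
      ∀ (r Ω Tuv Tuu Tvv S : ℝ × ℝ → ℝ),
        ContDiffOn ℝ 2 r (rect U V) → ContDiffOn ℝ 2 Ω (rect U V) →
        (∀ p ∈ rect U V, 0 < r p) → (∀ p ∈ rect U V, 0 < Ω p) →
        ContinuousOn Tuv (rect U V) → ContinuousOn Tuu (rect U V) →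
        ContinuousOn Tvv (rect U V) → ContinuousOn S (rect U V) →
        (∀ p ∈ rect U V, 0 ≤ Tuv p) → (∀ p ∈ rect U V, 0 ≤ Tuu p) →
        (∀ p ∈ rect U V, 0 ≤ Tvv p) → (∀ p ∈ rect U V, 0 ≤ S p) →
        (∀ p ∈ rect U V, pd1 (pd2 r) p =
          -(k * Ω p ^ 2) / (4 * r p) - (r p)⁻¹ * pd1 r p * pd2 r p
            + 4 * π * r p * Tuv p + (1 / 4) * r p * Ω p ^ 2 * Λ) →
        (∀ p ∈ rect U V, pd1 (pd2 (fun q => Real.log (Ω q))) p =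
          -(4 * π * Tuv p) + k * Ω p ^ 2 / (4 * r p ^ 2)
            + (r p ^ 2)⁻¹ * pd1 r p * pd2 r p - π * Ω p ^ 2 * S p) →
        (∀ p ∈ rect U V, pd2 (fun q => (Ω q ^ 2)⁻¹ * pd2 r q) p =
          -(4 * π * r p * Tvv p * (Ω p ^ 2)⁻¹)) →
        (∀ p ∈ rect U V, pd1 (fun q => (Ω q ^ 2)⁻¹ * pd1 r q) p =
          -(4 * π * r p * Tuu p * (Ω p ^ 2)⁻¹)) →
        (∀ p ∈ rect U V, r₀ ≤ r p ∧ r p ≤ R) →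
        (∫ u in (0 : ℝ)..U, ∫ v in (0 : ℝ)..V, Ω (u, v) ^ 2) ≤ B →
        (∀ v ∈ Set.Icc (0 : ℝ) V, |Real.log (Ω (0, v) ^ 2)| ≤ C) →
        (∀ u ∈ Set.Icc (0 : ℝ) U, |Real.log (Ω (u, 0) ^ 2)| ≤ C) →
        ∀ p ∈ rect U V, Real.log (Ω p ^ 2) ≤ C' :=
  logOmega_squared_upper_bound_general k Λ r₀ R U V B C hr₀ hU hV
end

section
/- Fix constants k ∈ ℝ and Λ ≤ 0. Let W ⊆ ℝ² be open, let r, Ω : W → ℝ be C² with r > 0 and Ω > 0, and let T_uv, T_uu, T_vv : W → ℝ be functions such that on W (writing ν = ∂_u r, λ = ∂_v r): (evol1) ∂_u∂_v r = −kΩ²/(4r) − r⁻¹νλ + 4πr T_uv + (1/4)rΩ²Λ; (const2) ∂_u(Ω⁻²ν) = −4πr T_uu Ω⁻²; (const1) ∂_v(Ω⁻²λ) = −4πr T_vv Ω⁻². Define m := (r/2)(k + 4Ω⁻²νλ). Suppose at a point p ∈ W: ν(p)·λ(p) > 0, T_uu(p) ≥ 0, T_vv(p) ≥ 0, and T_uv(p)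 ≤ √(T_uu(p)·T_vv(p)). Then −ν(p)⁻¹·∂_u m(p) − λ(p)⁻¹·∂_v m(p) ≥ −r(p)²·Λ ≥ 0. -/
/-!
Writing `ν = ∂_u r`, `λ = ∂_v r`, (const2) and (evol1) give
`∂_u m = 8πr²Ω⁻²(T_uv ν - T_uu λ) + r²Λν/2`: the `k` and `νλ` terms of (evol1) cancel against
`∂_u r · (k + 4Ω⁻²νλ)/2`. Symmetrically (after commuting the mixed partials of the `C²` function
`r`), `∂_v m = 8πr²Ω⁻²(T_uv λ - T_vv ν) + r²Λλ/2`. Hence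
`-ν⁻¹∂_u m - λ⁻¹∂_v m = -r²Λ + 8πr²Ω⁻²(νλ)⁻¹(T_uu λ² + T_vv ν² - 2T_uv νλ)`, and the bracket is
nonnegative by AM-GM, `T_uu λ² + T_vv ν² ≥ 2√(T_uu T_vv) νλ ≥ 2T_uv νλ`, since `νλ > 0`.
-/

open Real Filter Topology

section PartialDerivatives

variable {f : ℝ × ℝ → ℝ} {p : ℝ × ℝ}

lemma pd1_eq_fderiv (hf : DifferentiableAt ℝ f p) : pd1 f p = fderiv ℝ f p (1, 0) :=
  (hf.hasFDerivAt.comp_hasDerivAt p.1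
    ((hasDerivAt_id p.1).prodMk (hasDerivAt_const p.1 p.2))).deriv

lemma pd2_eq_fderiv (hf : DifferentiableAt ℝ f p) : pd2 f p = fderiv ℝ f p (0, 1) :=
  (hf.hasFDerivAt.comp_hasDerivAt p.2
    ((hasDerivAt_const p.2 p.1).prodMk (hasDerivAt_id p.2))).deriv

lemma hasDerivAt_pd1 (hf : DifferentiableAt ℝ f p) :
    HasDerivAt (fun x => f (x, p.2)) (pd1 f p) p.1 :=
  (hf.comp p.1 (differentiableAt_id.prodMk (differentiableAt_const _))).hasDerivAt

lemma hasDerivAt_pd2 (hf : DifferentiableAt ℝ f p) :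
    HasDerivAt (fun y => f (p.1, y)) (pd2 f p) p.2 :=
  (hf.comp p.2 ((differentiableAt_const _).prodMk differentiableAt_id)).hasDerivAt

lemma pd1_eventuallyEq_fderiv (hf : ContDiffAt ℝ 1 f p) :
    pd1 f =ᶠ[𝓝 p] fun q => fderiv ℝ f q (1, 0) :=
  (hf.eventually (by simp)).mono fun _ hq => pd1_eq_fderiv (hq.differentiableAt one_ne_zero)

lemma pd2_eventuallyEq_fderiv (hf : ContDiffAt ℝ 1 f p) :
    pd2 f =ᶠ[𝓝 p] fun q => fderiv ℝ f q (0, 1) :=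
  (hf.eventually (by simp)).mono fun _ hq => pd2_eq_fderiv (hq.differentiableAt one_ne_zero)

lemma differentiableAt_fderiv (hf : ContDiffAt ℝ 2 f p) : DifferentiableAt ℝ (fderiv ℝ f) p :=
  (hf.fderiv_right (m := 1) (by norm_num)).differentiableAt one_ne_zero

lemma differentiableAt_pd1 (hf : ContDiffAt ℝ 2 f p) : DifferentiableAt ℝ (pd1 f) p :=
  ((differentiableAt_fderiv hf).clm_apply (differentiableAt_const _)).congr_of_eventuallyEq
    (pd1_eventuallyEq_fderiv (hf.of_le one_le_two))

lemma differentiableAt_pd2 (hf : ContDiffAt ℝ 2 f p) : DifferentiableAt ℝ (pd2 f) p :=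
  ((differentiableAt_fderiv hf).clm_apply (differentiableAt_const _)).congr_of_eventuallyEq
    (pd2_eventuallyEq_fderiv (hf.of_le one_le_two))

lemma pd2_pd1_eq_fderiv_fderiv (hf : ContDiffAt ℝ 2 f p) :
    pd2 (pd1 f) p = fderiv ℝ (fderiv ℝ f) p (0, 1) (1, 0) := by
  rw [pd2_eq_fderiv (differentiableAt_pd1 hf),
    (pd1_eventuallyEq_fderiv (hf.of_le one_le_two)).fderiv_eq,
    fderiv_clm_apply (differentiableAt_fderiv hf) (differentiableAt_const _)]
  simp

lemma pd1_pd2_eq_fderiv_fderiv (hf : ContDiffAt ℝ 2 f p) :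
    pd1 (pd2 f) p = fderiv ℝ (fderiv ℝ f) p (1, 0) (0, 1) := by
  rw [pd1_eq_fderiv (differentiableAt_pd2 hf),
    (pd2_eventuallyEq_fderiv (hf.of_le one_le_two)).fderiv_eq,
    fderiv_clm_apply (differentiableAt_fderiv hf) (differentiableAt_const _)]
  simp

theorem pd2_pd1_eq_pd1_pd2 (hf : ContDiffAt ℝ 2 f p) : pd2 (pd1 f) p = pd1 (pd2 f) p := by
  rw [pd2_pd1_eq_fderiv_fderiv hf, pd1_pd2_eq_fderiv_fderiv hf,
    hf.isSymmSndFDerivAt (by simp)]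

end PartialDerivatives

noncomputable def hawkingMass (k : ℝ) (r Ω : ℝ × ℝ → ℝ) : ℝ × ℝ → ℝ :=
  fun q => r q / 2 * (k + 4 * (Ω q ^ 2)⁻¹ * pd1 r q * pd2 r q)

section HawkingMass

variable {k Λ Tuv T : ℝ} {r Ω : ℝ × ℝ → ℝ} {p : ℝ × ℝ}

theorem pd1_hawkingMass (hr : ContDiffAt ℝ 2 r p) (hΩ : DifferentiableAt ℝ Ω p)
    (hr0 : r p ≠ 0) (hΩ0 : Ω p ≠ 0)
    (hevol : pd1 (pd2 r) p = -(k * Ω p ^ 2) / (4 * r p) - (r p)⁻¹ * pd1 r p * pd2 r p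
        + 4 * π * r p * Tuv + (1 / 4) * r p * Ω p ^ 2 * Λ)
    (hconst : pd1 (fun q => (Ω q ^ 2)⁻¹ * pd1 r q) p = -(4 * π * r p * T * (Ω p ^ 2)⁻¹)) :
    pd1 (hawkingMass k r Ω) p =
      8 * π * r p ^ 2 * (Ω p ^ 2)⁻¹ * (Tuv * pd1 r p - T * pd2 r p)
        + r p ^ 2 * Λ * pd1 r p / 2 := by
  have hN : DifferentiableAt ℝ (fun q => (Ω q ^ 2)⁻¹ * pd1 r q) p :=
    ((hΩ.pow 2).inv (pow_ne_zero 2 hΩ0)).mul (differentiableAt_pd1 hr)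
  have hm : (fun x => hawkingMass k r Ω (x, p.2)) = fun x => r (x, p.2) / 2 *
      (k + 4 * ((Ω (x, p.2) ^ 2)⁻¹ * pd1 r (x, p.2)) * pd2 r (x, p.2)) := by
    funext x; simp only [hawkingMass]; ring
  rw [pd1, hm, (((hasDerivAt_pd1 (hr.differentiableAt two_ne_zero)).div_const 2).fun_mul
      ((((hasDerivAt_pd1 hN).const_mul 4).fun_mul
        (hasDerivAt_pd1 (differentiableAt_pd2 hr))).const_add k)).deriv, hevol, hconst]
  field_simp
  ring

theorem pd2_hawkingMass (hr : ContDiffAt ℝ 2 r p) (hΩ : DifferentiableAt ℝ Ω p)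
    (hr0 : r p ≠ 0) (hΩ0 : Ω p ≠ 0)
    (hevol : pd2 (pd1 r) p = -(k * Ω p ^ 2) / (4 * r p) - (r p)⁻¹ * pd1 r p * pd2 r p
        + 4 * π * r p * Tuv + (1 / 4) * r p * Ω p ^ 2 * Λ)
    (hconst : pd2 (fun q => (Ω q ^ 2)⁻¹ * pd2 r q) p = -(4 * π * r p * T * (Ω p ^ 2)⁻¹)) :
    pd2 (hawkingMass k r Ω) p =
      8 * π * r p ^ 2 * (Ω p ^ 2)⁻¹ * (Tuv * pd2 r p - T * pd1 r p)
        + r p ^ 2 * Λ * pd2 r p / 2 := by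
  have hL : DifferentiableAt ℝ (fun q => (Ω q ^ 2)⁻¹ * pd2 r q) p :=
    ((hΩ.pow 2).inv (pow_ne_zero 2 hΩ0)).mul (differentiableAt_pd2 hr)
  have hm : (fun y => hawkingMass k r Ω (p.1, y)) = fun y => r (p.1, y) / 2 *
      (k + 4 * ((Ω (p.1, y) ^ 2)⁻¹ * pd2 r (p.1, y)) * pd1 r (p.1, y)) := by
    funext y; simp only [hawkingMass]; ring
  rw [pd2, hm, (((hasDerivAt_pd2 (hr.differentiableAt two_ne_zero)).div_const 2).fun_mul
      ((((hasDerivAt_pd2 hL).const_mul 4).fun_mul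
        (hasDerivAt_pd2 (differentiableAt_pd1 hr))).const_add k)).deriv, hevol, hconst]
  field_simp
  ring

end HawkingMass

lemma two_mul_mul_le_of_le_sqrt {a b c x y : ℝ} (ha : 0 ≤ a) (hb : 0 ≤ b) (hxy : 0 ≤ x * y)
    (hc : c ≤ √(a * b)) : 2 * c * (x * y) ≤ a * y ^ 2 + b * x ^ 2 := by
  calc 2 * c * (x * y) ≤ 2 * (√a * √b) * (x * y) := by rw [← sqrt_mul ha]; gcongr
    _ ≤ a * y ^ 2 + b * x ^ 2 := by
      nlinarith [sq_nonneg (√a * y - √b * x), sq_sqrt ha, sq_sqrt hb]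

lemma neg_sq_mul_le_timelike_combination {ν ℓ R w a b c Λ : ℝ} (hνℓ : 0 < ν * ℓ) (hw : 0 ≤ w)
    (habc : 2 * c * (ν * ℓ) ≤ a * ℓ ^ 2 + b * ν ^ 2) :
    -(R ^ 2) * Λ ≤ -ν⁻¹ * (8 * π * R ^ 2 * w * (c * ν - a * ℓ) + R ^ 2 * Λ * ν / 2)
      - ℓ⁻¹ * (8 * π * R ^ 2 * w * (c * ℓ - b * ν) + R ^ 2 * Λ * ℓ / 2) := by
  have hν : ν ≠ 0 := left_ne_zero_of_mul hνℓ.ne'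
  have hℓ : ℓ ≠ 0 := right_ne_zero_of_mul hνℓ.ne'
  have hexcess : 0 ≤ 8 * π * R ^ 2 * w * (ν * ℓ)⁻¹ * (a * ℓ ^ 2 + b * ν ^ 2 - 2 * c * (ν * ℓ)) :=
    mul_nonneg (by positivity) (sub_nonneg.mpr habc)
  calc -(R ^ 2) * Λ
      ≤ -(R ^ 2) * Λ
        + 8 * π * R ^ 2 * w * (ν * ℓ)⁻¹ * (a * ℓ ^ 2 + b * ν ^ 2 - 2 * c * (ν * ℓ)) :=
        le_add_of_nonneg_right hexcess
    _ = _ := by field_simp; ring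

/-- The key computation of Proposition 9.2 (otherprop): with `Λ ≤ 0`, the Hawking mass
`m = (r/2)(k + 4Ω⁻²νλ)` is monotone nondecreasing along the past-pointing timelike
vector field `T = −(ν⁻¹∂_u + λ⁻¹∂_v)`. -/
theorem hawking_mass_timelike_monotonicity
    (k Λ : ℝ) (hΛ : Λ ≤ 0) (W : Set (ℝ × ℝ)) (hW : IsOpen W)
    (r Ω Tuv Tuu Tvv : ℝ × ℝ → ℝ)
    (hr : ContDiffOn ℝ 2 r W) (hΩ : ContDiffOn ℝ 2 Ω W)
    (hrpos : ∀ p ∈ W, 0 < r p) (hΩpos : ∀ p ∈ W, 0 < Ω p)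
    (hevol1 : ∀ p ∈ W, pd1 (pd2 r) p =
      -(k * Ω p ^ 2) / (4 * r p) - (r p)⁻¹ * pd1 r p * pd2 r p
        + 4 * π * r p * Tuv p + (1 / 4) * r p * Ω p ^ 2 * Λ)
    (hconst2 : ∀ p ∈ W, pd1 (fun q => (Ω q ^ 2)⁻¹ * pd1 r q) p =
      -(4 * π * r p * Tuu p * (Ω p ^ 2)⁻¹))
    (hconst1 : ∀ p ∈ W, pd2 (fun q => (Ω q ^ 2)⁻¹ * pd2 r q) p =
      -(4 * π * r p * Tvv p * (Ω p ^ 2)⁻¹))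
    (p : ℝ × ℝ) (hp : p ∈ W)
    (hnulam : 0 < pd1 r p * pd2 r p)
    (hTuu : 0 ≤ Tuu p) (hTvv : 0 ≤ Tvv p)
    (hTuv : Tuv p ≤ Real.sqrt (Tuu p * Tvv p)) :
    -(pd1 r p)⁻¹ *
        pd1 (fun q => r q / 2 * (k + 4 * (Ω q ^ 2)⁻¹ * pd1 r q * pd2 r q)) p
      - (pd2 r p)⁻¹ *
        pd2 (fun q => r q / 2 * (k + 4 * (Ω q ^ 2)⁻¹ * pd1 r q * pd2 r q)) p
      ≥ -(r p ^ 2) * Λ ∧ -(r p ^ 2) * Λ ≥ 0 := by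
  have hWp : W ∈ 𝓝 p := hW.mem_nhds hp
  have hr2 : ContDiffAt ℝ 2 r p := hr.contDiffAt hWp
  have hΩ1 : DifferentiableAt ℝ Ω p := (hΩ.contDiffAt hWp).differentiableAt two_ne_zero
  have hr0 : r p ≠ 0 := (hrpos p hp).ne'
  have hΩ0 : Ω p ≠ 0 := (hΩpos p hp).ne'
  have hu := pd1_hawkingMass hr2 hΩ1 hr0 hΩ0 (hevol1 p hp) (hconst2 p hp)
  have hv := pd2_hawkingMass hr2 hΩ1 hr0 hΩ0
    ((pd2_pd1_eq_pd1_pd2 hr2).trans (hevol1 p hp)) (hconst1 p hp)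
  unfold hawkingMass at hu hv
  rw [hu, hv]
  exact ⟨neg_sq_mul_le_timelike_combination hnulam (by positivity)
      (two_mul_mul_le_of_le_sqrt hTuu hTvv hnulam.le hTuv),
    mul_nonneg_of_nonpos_of_nonpos (neg_nonpos.mpr (sq_nonneg _)) hΛ⟩
end

section
/- Let G be a symmetric positive-definite 2×2 real matrix, and let r, Ω, δ be positive reals, and F ≥ 0, X ≥ 0. Let f : (0,∞)×ℝ² → [0,∞) be measurable with f ≤ F everywhere and f(p,q) = 0 whenever r⁴·⟨q, G q⟩ > X. Define (as integrals with values in [0,∞], over (0,∞)×ℝ²) N^u := ∫ r² f(p,q) √(det G) dp dq and T_vv := (Ω⁴/4) ∫ r² p f(p,q) √(det G) dp dq. Then N^u ≤ 4·Ω⁻⁴·δ⁻¹·T_vv + π·F·X·r⁻²·δ. -/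
/-!
Split momentum space at `p^u = δ`. Above `δ` we have `p^u / δ ≥ 1`, so the density of `N^u`
is dominated by `δ⁻¹` times that of `T_vv`. Below `δ`, the bounds `f ≤ F` and
`r⁴ ⟨q, G q⟩ ≤ X` confine the density to the cylinder `(0, δ] × {⟨q, G q⟩ ≤ X r⁻⁴}`; writing
`G = Bᵀ B`, the ellipse is the preimage under `B` of a disc of area `π X r⁻⁴`, so the cylinder has
volume `δ π X r⁻⁴ / √(det G)`.
-/

open MeasureTheory Matrix Real

theorem ENNReal.ofReal_mul_ofReal_le (a b : ℝ) :
    ENNReal.ofReal a * ENNReal.ofReal b ≤ ENNReal.ofReal (a * b) := by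
  rcases le_or_gt 0 a with ha | ha
  · rw [ENNReal.ofReal_mul ha]
  · rw [ENNReal.ofReal_of_nonpos ha.le, zero_mul]
    exact zero_le

theorem volume_setOf_dotProduct_self_le (c : ℝ) :
    volume {y : Fin 2 → ℝ | y ⬝ᵥ y ≤ c} = ENNReal.ofReal (π * c) := by
  rcases lt_or_ge c 0 with hc | hc
  · have hempty : {y : Fin 2 → ℝ | y ⬝ᵥ y ≤ c} = ∅ :=
      Set.eq_empty_of_forall_notMem fun y hy => hc.not_ge <|
        (dotProduct_self_star_nonneg y).trans hy
    rw [hempty, measure_empty, ENNReal.ofReal_of_nonpos (by nlinarith [pi_pos])]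
  have hball : (MeasurableEquiv.toLp 2 (Fin 2 → ℝ)).symm ⁻¹' {y | y ⬝ᵥ y ≤ c}
      = Metric.closedBall (0 : EuclideanSpace ℝ (Fin 2)) √c := by
    ext z
    simp only [Set.mem_preimage, Set.mem_ofPred_eq, Metric.mem_closedBall, dist_zero_right,
      EuclideanSpace.norm_eq, MeasurableEquiv.toLp_symm_apply, ← Real.sqrt_le_sqrt_iff hc]
    simp [dotProduct, sq]
  have hmeas : MeasurableSet {y : Fin 2 → ℝ | y ⬝ᵥ y ≤ c} :=
    measurableSet_le (by fun_prop) measurable_const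
  rw [← (EuclideanSpace.volume_preserving_symm_measurableEquiv_toLp (Fin 2)).measure_preimage
    hmeas.nullMeasurableSet, hball, EuclideanSpace.volume_closedBall, Fintype.card_fin]
  rw [show ((2:ℕ):ℝ)/2 + 1 = 2 by norm_num, Real.Gamma_two, Real.sq_sqrt pi_nonneg,
    ← ENNReal.ofReal_pow (Real.sqrt_nonneg c), Real.sq_sqrt hc, div_one,
    ENNReal.ofReal_mul pi_nonneg, mul_comm]

open scoped MatrixOrder in
theorem Matrix.PosDef.volume_setOf_dotProduct_mulVec_le {G : Matrix (Fin 2) (Fin 2) ℝ}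
    (hG : G.PosDef) (c : ℝ) :
    volume {q : Fin 2 → ℝ | q ⬝ᵥ G *ᵥ q ≤ c} = ENNReal.ofReal (π * c / √G.det) := by
  obtain ⟨B, rfl⟩ := CStarAlgebra.nonneg_iff_eq_star_mul_self.mp hG.posSemidef.nonneg
  have hdet : (star B * B).det = B.det ^ 2 := by
    rw [det_mul, star_eq_conjTranspose, det_conjTranspose, star_trivial, sq]
  have hB : B.det ≠ 0 := fun h => hG.det_pos.ne' (by rw [hdet, h]; ring)
  have hpreimage : {q : Fin 2 → ℝ | q ⬝ᵥ (star B * B) *ᵥ q ≤ c}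
      = Matrix.toLin' B ⁻¹' {y | y ⬝ᵥ y ≤ c} := by
    ext q
    simp only [Set.mem_ofPred_eq, Set.mem_preimage, toLin'_apply, ← mulVec_mulVec,
      dotProduct_mulVec, star_eq_conjTranspose, vecMul_conjTranspose, star_trivial]
  rw [hpreimage, Measure.addHaar_preimage_linearMap _ (by rwa [LinearMap.det_toLin']),
    volume_setOf_dotProduct_self_le, LinearMap.det_toLin', hdet, Real.sqrt_sq_eq_abs,
    abs_inv, ← ENNReal.ofReal_mul (by positivity), inv_mul_eq_div]

theorem MeasureTheory.setLIntegral_le_const_mul_add_mul_measure {α : Type*} [MeasurableSpace α]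
    {μ : Measure α} {s B : Set α} (hs : MeasurableSet s) (hB : MeasurableSet B)
    {g h : α → ENNReal} {K c : ENNReal} (hK : K ≠ ⊤)
    (hgh : ∀ x ∈ s, g x ≤ K * h x + B.indicator (fun _ => c) x) :
    ∫⁻ x in s, g x ∂μ ≤ K * ∫⁻ x in s, h x ∂μ + c * μ B :=
  calc ∫⁻ x in s, g x ∂μ ≤ ∫⁻ x in s, (K * h x + B.indicator (fun _ => c) x) ∂μ :=
        setLIntegral_mono' hs hgh
    _ = K * ∫⁻ x in s, h x ∂μ + ∫⁻ x in s, B.indicator (fun _ => c) x ∂μ := by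
        rw [lintegral_add_right _ (measurable_const.indicator hB), lintegral_const_mul' _ _ hK]
    _ ≤ K * ∫⁻ x in s, h x ∂μ + c * μ B := by
        gcongr
        exact (setLIntegral_le_lintegral _ _).trans (lintegral_indicator_const_le _ _)

theorem ENNReal.ofReal_le_inv_mul_add_indicator {α : Type*} {B : Set α} {x : α}
    {δ p a M : ℝ} (hδ : 0 < δ) (hsmall : p ≤ δ → a ≤ 0 ∨ x ∈ B ∧ a ≤ M) :
    ENNReal.ofReal a ≤
      ENNReal.ofReal (δ⁻¹ * (p * a)) + B.indicator (fun _ => ENNReal.ofReal M) x := by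
  rcases lt_or_ge δ p with hlarge | hle
  · refine le_add_right ?_
    rw [← mul_assoc, inv_mul_eq_div, ENNReal.ofReal_mul (div_pos (hδ.trans hlarge) hδ).le]
    exact le_mul_of_one_le_left' (ENNReal.one_le_ofReal.2 ((one_le_div hδ).2 hlarge.le))
  rcases hsmall hle with hzero | ⟨hxB, haM⟩
  · simp [ENNReal.ofReal_of_nonpos hzero]
  · exact le_add_left (by simpa [hxB] using ENNReal.ofReal_le_ofReal haM)

theorem particle_current_estimate_general
    (G : Matrix (Fin 2) (Fin 2) ℝ) (hGpos : G.PosDef)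
    (r Ω δ : ℝ) (hr : 0 < r) (hΩ : 0 < Ω) (hδ : 0 < δ)
    (F X : ℝ)
    (f : ℝ × (Fin 2 → ℝ) → ℝ)
    (hfF : ∀ x ∈ Set.Ioi (0 : ℝ) ×ˢ (Set.univ : Set (Fin 2 → ℝ)), f x ≤ F)
    (hfsupp : ∀ x ∈ Set.Ioi (0 : ℝ) ×ˢ (Set.univ : Set (Fin 2 → ℝ)),
      r ^ 4 * (x.2 ⬝ᵥ G.mulVec x.2) > X → f x = 0) :
    (∫⁻ x in Set.Ioi (0 : ℝ) ×ˢ (Set.univ : Set (Fin 2 → ℝ)),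
        ENNReal.ofReal (r ^ 2 * f x * Real.sqrt G.det))
      ≤ ENNReal.ofReal (4 * (Ω ^ 4)⁻¹ * δ⁻¹) *
          (∫⁻ x in Set.Ioi (0 : ℝ) ×ˢ (Set.univ : Set (Fin 2 → ℝ)),
            ENNReal.ofReal (Ω ^ 4 / 4 * (r ^ 2 * x.1 * f x * Real.sqrt G.det)))
        + ENNReal.ofReal (π * F * X * (r ^ 2)⁻¹ * δ) := by
  set B := Set.Ioc 0 δ ×ˢ {q : Fin 2 → ℝ | q ⬝ᵥ G *ᵥ q ≤ X / r ^ 4}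
  have hB : MeasurableSet B :=
    measurableSet_Ioc.prod (measurableSet_le (by fun_prop) measurable_const)
  have hpointwise : ∀ x ∈ Set.Ioi (0 : ℝ) ×ˢ (Set.univ : Set (Fin 2 → ℝ)),
      ENNReal.ofReal (r ^ 2 * f x * √G.det) ≤ ENNReal.ofReal (4 * (Ω ^ 4)⁻¹ * δ⁻¹) *
          ENNReal.ofReal (Ω ^ 4 / 4 * (r ^ 2 * x.1 * f x * √G.det))
        + B.indicator (fun _ => ENNReal.ofReal (r ^ 2 * F * √G.det)) x := by
    intro x hx
    rw [← ENNReal.ofReal_mul (by positivity)]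
    convert ENNReal.ofReal_le_inv_mul_add_indicator hδ (p := x.1) fun hle => ?_ using 3
    · field_simp
    by_cases hq : r ^ 4 * (x.2 ⬝ᵥ G *ᵥ x.2) > X
    · simp [hfsupp x hx hq]
    · refine .inr ⟨⟨⟨hx.1, hle⟩, ?_⟩, by gcongr; exact hfF x hx⟩
      rw [Set.mem_ofPred_eq, le_div_iff₀' (by positivity)]
      exact not_lt.1 hq
  have hvolB : volume B = ENNReal.ofReal δ * ENNReal.ofReal (π * (X / r ^ 4) / √G.det) := by
    rw [Measure.volume_eq_prod, Measure.prod_prod, Real.volume_Ioc, sub_zero,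
      hGpos.volume_setOf_dotProduct_mulVec_le]
  have hdet : √G.det ≠ 0 := (Real.sqrt_pos.2 hGpos.det_pos).ne'
  refine (setLIntegral_le_const_mul_add_mul_measure (measurableSet_Ioi.prod .univ) hB
    ENNReal.ofReal_ne_top hpointwise).trans ?_
  gcongr
  rw [hvolB, ← mul_assoc]
  refine (mul_le_mul_left (ENNReal.ofReal_mul_ofReal_le _ _) _).trans
    ((ENNReal.ofReal_mul_ofReal_le _ _).trans (le_of_eq (congrArg _ ?_)))
  field_simp

/-- Inequality (ieqhelp) of Section 13: splitting the momentum integral at `p^u = δ` and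
using the angular-momentum bound `r⁴⟨q, G q⟩ ≤ X` on the support of `f` together with
`0 ≤ f ≤ F`, the particle current `N^u` is controlled by the energy flux `T_vv` plus a
small error: `N^u ≤ 4 Ω⁻⁴ δ⁻¹ T_vv + π F X r⁻² δ`. -/
theorem particle_current_estimate
    (G : Matrix (Fin 2) (Fin 2) ℝ) (hGsymm : G.IsSymm) (hGpos : G.PosDef)
    (r Ω δ : ℝ) (hr : 0 < r) (hΩ : 0 < Ω) (hδ : 0 < δ)
    (F X : ℝ) (hF : 0 ≤ F) (hX : 0 ≤ X)
    (f : ℝ × (Fin 2 → ℝ) → ℝ) (hfmeas : Measurable f)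
    (hf0 : ∀ x ∈ Set.Ioi (0 : ℝ) ×ˢ (Set.univ : Set (Fin 2 → ℝ)), 0 ≤ f x)
    (hfF : ∀ x ∈ Set.Ioi (0 : ℝ) ×ˢ (Set.univ : Set (Fin 2 → ℝ)), f x ≤ F)
    (hfsupp : ∀ x ∈ Set.Ioi (0 : ℝ) ×ˢ (Set.univ : Set (Fin 2 → ℝ)),
      r ^ 4 * (x.2 ⬝ᵥ G.mulVec x.2) > X → f x = 0) :
    (∫⁻ x in Set.Ioi (0 : ℝ) ×ˢ (Set.univ : Set (Fin 2 → ℝ)),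
        ENNReal.ofReal (r ^ 2 * f x * Real.sqrt G.det))
      ≤ ENNReal.ofReal (4 * (Ω ^ 4)⁻¹ * δ⁻¹) *
          (∫⁻ x in Set.Ioi (0 : ℝ) ×ˢ (Set.univ : Set (Fin 2 → ℝ)),
            ENNReal.ofReal (Ω ^ 4 / 4 * (r ^ 2 * x.1 * f x * Real.sqrt G.det)))
        + ENNReal.ofReal (π * F * X * (r ^ 2)⁻¹ * δ) :=
  particle_current_estimate_general G hGpos r Ω δ hr hΩ hδ F X f hfF hfsupp
end
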